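/- The limit as N → ∞ of (1/N)·Σ_{n=1}^{N} p_n minus the maximum of P(·,N) equals 1/2 - 2(ϑ - ϑ²), where p_n is as in the complete-information problem, P(r,N) = Σ_{i=r+1}^{N} 2(i-r)r/(i(i-1)N), and ϑ is the root of -log x - 2 + 2x = 0 in (0,1). -/

import Mathlib

/-- The optimal success probability in the best-or-worst secretary problem with `n` objects. -/
noncomputable def optProb (n : ℕ) : ℝ :=
  if n ≤ 2 then 1
  else if Even n then (n : ℝ) / (2 * ((n : ℝ) - 1))
  else ((n : ℝ) + 1) / (2 * n)

/-- The success probability of the cutoff strategy `r` when the number of objects is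
uniform on `[1,n]` in the best-or-worst secretary problem. -/
noncomputable def uniformProb (r n : ℕ) : ℝ :=
  ∑ i ∈ Finset.Icc (r + 1) n, 2 * ((i : ℝ) - r) * r / (i * (i - 1) * n)

/-!
The optimal probabilities satisfy `|p_n - 1/2| ≤ 1/n`, so their Cesàro means tend to `1/2`.
Partial fractions give `P(r,N) = (2r/N) (H_N - H_r + (1 - r)(1/r - 1/N))`, and the monotonicity of
`H_n - log n` and of `H_n - log (n + 1)` squeezes `H_N - H_r` between `log (N/r) - 1/r` and
`log (N/r)`; hence `P(r,N)` is within `2/N` of `f (r/N)`, where `f x = 2x (x - 1 - log x)`.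
Since `f' x = 2 (2x - 2 - log x)` is twice a convex function vanishing at `ϑ` and at `1`, `f`
increases on `(0, ϑ]` and decreases on `[ϑ, 1]`. So `max_r P(r,N)` is at most `f ϑ + 2/N` and at
least `f (⌈ϑN⌉/N) - 2/N`, and both bounds tend to `f ϑ = 2 (ϑ - ϑ²)`.
-/

open Real Filter Topology Finset

lemma abs_optProb_sub_half_le {n : ℕ} (hn : 3 ≤ n) : |optProb n - 1 / 2| ≤ 1 / n := by
  have hn' : (3 : ℝ) ≤ n := by exact_mod_cast hn
  rw [optProb, if_neg (by omega)]
  split_ifs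
  · rw [abs_of_nonneg (by rw [sub_nonneg, le_div_iff₀ (by linarith)]; linarith),
      div_sub_div _ _ (by linarith) two_ne_zero, div_le_div_iff₀ (by nlinarith) (by linarith)]
    nlinarith
  · rw [abs_of_nonneg (by rw [sub_nonneg, le_div_iff₀ (by linarith)]; linarith),
      div_sub_div _ _ (by linarith) two_ne_zero, div_le_div_iff₀ (by nlinarith) (by linarith)]
    nlinarith

lemma tendsto_optProb : Tendsto optProb atTop (𝓝 (1 / 2)) := by
  rw [← tendsto_sub_nhds_zero_iff]
  refine squeeze_zero_norm' ?_ tendsto_one_div_atTop_nhds_zero_nat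
  filter_upwards [eventually_ge_atTop 3] with n hn
  exact abs_optProb_sub_half_le hn

lemma tendsto_average_optProb :
    Tendsto (fun N : ℕ => 1 / (N : ℝ) * ∑ n ∈ Icc 1 N, optProb n) atTop (𝓝 (1 / 2)) := by
  convert (tendsto_optProb.comp (tendsto_add_atTop_nat 1)).cesaro using 2 with N
  rw [one_div, ← Ico_add_one_right_eq_Icc, sum_Ico_eq_sum_range]
  simp [add_comm]

lemma sum_Icc_sub_div_mul_pred {r N : ℕ} (hr : 1 ≤ r) (hrN : r ≤ N) :
    ∑ i ∈ Icc (r + 1) N, ((i : ℝ) - r) / (i * (i - 1)) =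
      harmonic N - harmonic r + (1 - r) * (1 / r - 1 / N) := by
  induction N, hrN using Nat.le_induction with
  | base => simp
  | succ N hrN ih =>
    have hN : (N : ℝ) ≠ 0 := Nat.cast_ne_zero.2 (by omega)
    rw [sum_Icc_succ_top (by omega), ih, harmonic_succ]
    push_cast
    rw [add_sub_cancel_right]
    field_simp
    ring

lemma uniformProb_eq {r N : ℕ} (hr : 1 ≤ r) (hrN : r ≤ N) :
    uniformProb r N = 2 * r / N * (harmonic N - harmonic r + (1 - r) * (1 / r - 1 / N)) := by
  rw [← sum_Icc_sub_div_mul_pred hr hrN, uniformProb, mul_sum]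
  refine sum_congr rfl fun i _ => ?_
  field_simp

lemma harmonic_sub_harmonic_le_log_sub_log {r N : ℕ} (hr : 1 ≤ r) (hrN : r ≤ N) :
    (harmonic N : ℝ) - harmonic r ≤ log N - log r := by
  have := strictAnti_eulerMascheroniSeq'.antitone hrN
  simp only [eulerMascheroniSeq', if_neg (by omega : r ≠ 0), if_neg (by omega : N ≠ 0)] at this
  linarith

lemma log_sub_log_sub_inv_le_harmonic_sub_harmonic {r N : ℕ} (hr : 1 ≤ r) (hrN : r ≤ N) :
    log N - log r - 1 / r ≤ (harmonic N : ℝ) - harmonic r := by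
  have hr' : (0 : ℝ) < r := by exact_mod_cast hr
  have hmono := strictMono_eulerMascheroniSeq.monotone hrN
  simp only [eulerMascheroniSeq] at hmono
  have hN : log N ≤ log (N + 1) := log_le_log (by exact_mod_cast hr.trans hrN) (by linarith)
  have hr1 : log (r + 1) - log r ≤ 1 / r := by
    rw [← log_div (by positivity) hr'.ne']
    refine (log_le_sub_one_of_pos (by positivity)).trans_eq ?_
    field_simp
    ring
  linarith

noncomputable def cutoffLimit (x : ℝ) : ℝ := 2 * x * (x - 1 - log x)

lemma abs_uniformProb_sub_cutoffLimit_le {r N : ℕ} (hr : 1 ≤ r) (hrN : r ≤ N) :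
    |uniformProb r N - cutoffLimit (r / N)| ≤ 2 / N := by
  have hr' : (0 : ℝ) < r := by exact_mod_cast hr
  have hrN' : (r : ℝ) ≤ N := by exact_mod_cast hrN
  have hN : (0 : ℝ) < N := hr'.trans_le hrN'
  set Δ : ℝ := (harmonic N - harmonic r) - (log N - log r)
  have hΔ_le : Δ ≤ 0 := by linarith [harmonic_sub_harmonic_le_log_sub_log hr hrN]
  have hΔ_ge : -(1 / r) ≤ Δ := by linarith [log_sub_log_sub_inv_le_harmonic_sub_harmonic hr hrN]
  have key : uniformProb r N - cutoffLimit (r / N) = (2 * r * Δ + 2) / N - 2 * r / N ^ 2 := by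
    rw [uniformProb_eq hr hrN, cutoffLimit, log_div hr'.ne' hN.ne']
    field_simp
    ring
  have hrΔ : -1 ≤ r * Δ := by
    have := mul_le_mul_of_nonneg_left hΔ_ge hr'.le
    rwa [mul_neg, mul_one_div_cancel hr'.ne'] at this
  have hrΔ' : r * Δ ≤ 0 := mul_nonpos_of_nonneg_of_nonpos hr'.le hΔ_le
  have hcorr : 2 * (r : ℝ) / N ^ 2 ≤ 2 / N := by
    rw [div_le_div_iff₀ (by positivity) hN]
    nlinarith
  rw [key, abs_le]
  constructor
  · have : 0 ≤ (2 * r * Δ + 2) / N := div_nonneg (by linarith) hN.le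
    linarith
  · have : (2 * r * Δ + 2) / N ≤ 2 / N := div_le_div_of_nonneg_right (by linarith) hN.le
    linarith [show 0 ≤ 2 * (r : ℝ) / N ^ 2 by positivity]

lemma hasDerivAt_cutoffLimit {x : ℝ} (hx : 0 < x) :
    HasDerivAt cutoffLimit (2 * (2 * x - 2 - log x)) x := by
  have := ((hasDerivAt_id x).const_mul 2).mul (((hasDerivAt_id x).sub_const 1).sub
    (hasDerivAt_log hx.ne'))
  refine this.congr_deriv ?_
  simp only [Pi.sub_apply, id]
  field_simp
  ring

lemma convexOn_two_mul_sub_two_sub_log :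
    ConvexOn ℝ (Set.Ioi 0) fun x => 2 * x - 2 - log x := by
  have hlin : ConvexOn ℝ (Set.Ioi 0) fun x : ℝ => 2 * x - 2 :=
    ((convexOn_id (convex_Ioi 0)).smul zero_le_two).sub (concaveOn_const 2 (convex_Ioi 0))
  exact hlin.sub strictConcaveOn_log_Ioi.concaveOn

lemma cutoffLimit_le_of_log_eq {ϑ x : ℝ} (hϑ : ϑ ∈ Set.Ioo 0 1) (heq : log ϑ = 2 * ϑ - 2)
    (hx : x ∈ Set.Ioc 0 1) : cutoffLimit x ≤ cutoffLimit ϑ := by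
  set g : ℝ → ℝ := fun x => 2 * x - 2 - log x
  have hg : ConvexOn ℝ (Set.Ioi 0) g := convexOn_two_mul_sub_two_sub_log
  have hgϑ : g ϑ = 0 := by simp only [g, heq]; ring
  have hg1 : g 1 = 0 := by simp [g]
  have hcont : ContinuousOn cutoffLimit (Set.Ioi 0) := fun y hy =>
    (hasDerivAt_cutoffLimit hy).continuousAt.continuousWithinAt
  have hmono : MonotoneOn cutoffLimit (Set.Ioc 0 ϑ) := by
    refine monotoneOn_of_hasDerivWithinAt_nonneg (convex_Ioc 0 ϑ)
      (hcont.mono Set.Ioc_subset_Ioi_self)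
      (fun y hy => (hasDerivAt_cutoffLimit (interior_subset hy).1).hasDerivWithinAt) ?_
    rw [interior_Ioc]
    intro y hy
    have := hg.le_left_of_right_le'' hy.1 (Set.mem_Ioi.2 one_pos) hy.2.le hϑ.2
      (hg1.trans hgϑ.symm).le
    linarith
  have hanti : AntitoneOn cutoffLimit (Set.Icc ϑ 1) := by
    refine antitoneOn_of_hasDerivWithinAt_nonpos (convex_Icc ϑ 1)
      (hcont.mono fun y hy => hϑ.1.trans_le hy.1)
      (fun y hy =>
        (hasDerivAt_cutoffLimit (hϑ.1.trans_le (interior_subset hy).1)).hasDerivWithinAt) ?_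
    intro y hy
    have := hg.le_on_segment hϑ.1 (Set.mem_Ioi.2 one_pos)
      (by rw [segment_eq_Icc hϑ.2.le]; exact interior_subset hy)
    rw [hgϑ, hg1, max_self] at this
    linarith
  rcases le_total x ϑ with hxϑ | hϑx
  · exact hmono ⟨hx.1, hxϑ⟩ ⟨hϑ.1, le_rfl⟩ hxϑ
  · exact hanti ⟨le_rfl, hϑ.2.le⟩ ⟨hϑx, hx.2⟩ hϑx

lemma cutoffLimit_of_log_eq {ϑ : ℝ} (heq : log ϑ = 2 * ϑ - 2) :
    cutoffLimit ϑ = 2 * (ϑ - ϑ ^ 2) := by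
  rw [cutoffLimit, heq]
  ring

noncomputable def maxUniformProb (N : ℕ) : ℝ :=
  (Icc 0 N).sup' ⟨0, mem_Icc.2 ⟨le_rfl, Nat.zero_le N⟩⟩ fun r => uniformProb r N

lemma maxUniformProb_le_of_log_eq {ϑ : ℝ} (hϑ : ϑ ∈ Set.Ioo 0 1) (heq : log ϑ = 2 * ϑ - 2)
    (N : ℕ) : maxUniformProb N ≤ cutoffLimit ϑ + 2 / N := by
  have hlimit_nonneg : 0 ≤ cutoffLimit ϑ := by
    rw [cutoffLimit_of_log_eq heq]
    nlinarith [hϑ.1, hϑ.2]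
  refine sup'_le _ _ fun r hr => ?_
  obtain ⟨-, hrN⟩ := mem_Icc.1 hr
  rcases Nat.eq_zero_or_pos r with rfl | hr
  · simp only [uniformProb, CharP.cast_eq_zero, mul_zero, zero_div, sum_const_zero]
    positivity
  · have hN : (0 : ℝ) < N := by exact_mod_cast hr.trans_le hrN
    have hx : (r : ℝ) / N ∈ Set.Ioc 0 1 :=
      ⟨by positivity, div_le_one_of_le₀ (by exact_mod_cast hrN) hN.le⟩
    linarith [(abs_le.1 (abs_uniformProb_sub_cutoffLimit_le hr hrN)).2,
      cutoffLimit_le_of_log_eq hϑ heq hx]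

lemma cutoffLimit_sub_le_maxUniformProb {r N : ℕ} (hr : 1 ≤ r) (hrN : r ≤ N) :
    cutoffLimit (r / N) - 2 / N ≤ maxUniformProb N := by
  have : uniformProb r N ≤ maxUniformProb N :=
    le_sup' (fun r => uniformProb r N) (mem_Icc.2 ⟨Nat.zero_le r, hrN⟩)
  linarith [(abs_le.1 (abs_uniformProb_sub_cutoffLimit_le hr hrN)).1]

lemma tendsto_maxUniformProb {ϑ : ℝ} (hϑ : ϑ ∈ Set.Ioo 0 1) (heq : log ϑ = 2 * ϑ - 2) :
    Tendsto maxUniformProb atTop (𝓝 (cutoffLimit ϑ)) := by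
  have h2N : Tendsto (fun N : ℕ => 2 / (N : ℝ)) atTop (𝓝 0) :=
    tendsto_const_div_atTop_nhds_zero_nat 2
  have hceil : Tendsto (fun N : ℕ => (⌈ϑ * N⌉₊ : ℝ) / N) atTop (𝓝 ϑ) :=
    (tendsto_nat_ceil_mul_div_atTop hϑ.1.le).comp tendsto_natCast_atTop_atTop
  have hlower := ((hasDerivAt_cutoffLimit hϑ.1).continuousAt.tendsto.comp hceil).sub h2N
  have hupper := tendsto_const_nhds (x := cutoffLimit ϑ) (f := atTop).add h2N
  rw [sub_zero] at hlower
  rw [add_zero] at hupper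
  refine tendsto_of_tendsto_of_tendsto_of_le_of_le' hlower hupper ?_
    (Eventually.of_forall (maxUniformProb_le_of_log_eq hϑ heq))
  filter_upwards [eventually_ge_atTop 1] with N hN
  refine cutoffLimit_sub_le_maxUniformProb (Nat.one_le_iff_ne_zero.2 ?_) (Nat.ceil_le.2 ?_)
  · simpa using mul_pos hϑ.1 (by exact_mod_cast hN : (0 : ℝ) < N)
  · nlinarith [hϑ.2, (by exact_mod_cast hN : (1 : ℝ) ≤ N)]

theorem stmt_13 (ϑ : ℝ) (hϑ : ϑ ∈ Set.Ioo (0 : ℝ) 1)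
    (heq : Real.log ϑ = 2 * ϑ - 2) :
    Filter.Tendsto
      (fun N : ℕ => (1 / (N : ℝ)) * ∑ n ∈ Finset.Icc 1 N, optProb n -
        (Finset.Icc 0 N).sup' ⟨0, Finset.mem_Icc.2 ⟨le_rfl, Nat.zero_le N⟩⟩
          (fun r => uniformProb r N))
      Filter.atTop (nhds (1 / 2 - 2 * (ϑ - ϑ ^ 2))) := by
  rw [← cutoffLimit_of_log_eq heq]
  exact tendsto_average_optProb.sub (tendsto_maxUniformProb hϑ heq)
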